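/- (Lemma 3, variants of a composed FSMv.) Let A1 and A2 be FSMv's over alphabets Σ1, Σ2 with disjoint variable sets Var1, Var2, composed with a composition predicate ρ12 into A1 ∥ A2. Let π be a valid configuration of A1 ∥ A2 and write π = π1 + π2 where πi is the (valid) restriction of π to Vari. Then L((A1 ∥ A2)↓π) = L(A1↓π1) ∥ L(A2↓π2), where the right-hand side is the asynchronous shuffle of the two variant languages with respect to the alphabets Σ1 and Σ2. -/

import Mathlib

attribute [local instance] Classical.propDecidable

/-- A configuration over a set `S` of variables: an assignment of a value in
`Dm x` to every variable `x ∈ S`. -/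
def Config {V : Type} (Dm : V → Type) (S : Set V) : Type :=
  ∀ x : V, x ∈ S → Dm x

/-- The restriction of a configuration over `S ∪ T` to `S`. -/
def Config.restrictL {V : Type} {Dm : V → Type} {S T : Set V}
    (π : Config Dm (S ∪ T)) : Config Dm S :=
  fun x hx => π x (Set.mem_union_left T hx)

/-- The restriction of a configuration over `S ∪ T` to `T`. -/
def Config.restrictR {V : Type} {Dm : V → Type} {S T : Set V}
    (π : Config Dm (S ∪ T)) : Config Dm T :=
  fun x hx => π x (Set.mem_union_right S hx)

/-- `π1 + π2`: the configuration over `S ∪ T` agreeing with `π1` on `S` and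
with `π2` on `T` (unique when `S` and `T` are disjoint). -/
noncomputable def Config.plus {V : Type} {Dm : V → Type} {S T : Set V}
    (π1 : Config Dm S) (π2 : Config Dm T) : Config Dm (S ∪ T) :=
  fun x hx =>
    if h : x ∈ S then π1 x h
    else π2 x (((Set.mem_union x S T).mp hx).resolve_left h)

/-- A finite state machine with variability (FSMv): states `Q` with initial state
`q0`, event alphabet `alph ⊆ Ev`, variable set `Vars ⊆ V`, guarded transitions `E`
(each transition `(s, g, a, s')` has its event `a` in the alphabet), and a global
predicate `ρ` on configurations; a configuration `π` is *valid* if `ρ π` holds. -/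
structure FSMv (V : Type) (Dm : V → Type) (Ev : Type) : Type 1 where
  Q : Type
  q0 : Q
  alph : Set Ev
  Vars : Set V
  E : Set (Q × (Config Dm Vars → Prop) × Ev × Q)
  E_alph : ∀ s g a s', (s, g, a, s') ∈ E → a ∈ alph
  ρ : Config Dm Vars → Prop

/-- `A.Reach π w s`: in the variant `A↓π` there is a path from the initial state
to `s` labelled `w`, using only transitions whose guards are satisfied by `π`. -/
inductive FSMv.Reach {V Ev : Type} {Dm : V → Type} (A : FSMv V Dm Ev)
    (π : Config Dm A.Vars) : List Ev → A.Q → Prop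
  | nil : FSMv.Reach A π [] A.q0
  | snoc {w : List Ev} {s : A.Q} {g : Config Dm A.Vars → Prop} {a : Ev} {s' : A.Q} :
      FSMv.Reach A π w s → (s, g, a, s') ∈ A.E → g π → FSMv.Reach A π (w ++ [a]) s'

/-- `A.Lang π = L(A↓π)`: the language of the variant of `A` under configuration `π`. -/
def FSMv.Lang {V Ev : Type} {Dm : V → Type} (A : FSMv V Dm Ev)
    (π : Config Dm A.Vars) : Set (List Ev) :=
  { w | ∃ s, A.Reach π w s }

/-- The parallel composition `A1 ∥ A2` of two FSMv's (over disjoint variable sets)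
with composition predicate `ρ12`: machines synchronize on shared events
`H = Σ1 ∩ Σ2` and move independently on private events; its global predicate
is `ρ12 ∧ ρ1 ∧ ρ2`. -/
def FSMv.par {V Ev : Type} {Dm : V → Type} (A1 A2 : FSMv V Dm Ev)
    (ρ12 : Config Dm (A1.Vars ∪ A2.Vars) → Prop) : FSMv V Dm Ev where
  Q := A1.Q × A2.Q
  q0 := (A1.q0, A2.q0)
  alph := A1.alph ∪ A2.alph
  Vars := A1.Vars ∪ A2.Vars
  E := { t | ∃ (s1 s1' : A1.Q) (s2 s2' : A2.Q) (a : Ev)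
      (g : Config Dm (A1.Vars ∪ A2.Vars) → Prop),
      t = ((s1, s2), g, a, (s1', s2')) ∧
      ((a ∈ A1.alph ∩ A2.alph ∧
          ∃ g1 g2, (s1, g1, a, s1') ∈ A1.E ∧ (s2, g2, a, s2') ∈ A2.E ∧
            g = fun π => g1 π.restrictL ∧ g2 π.restrictR) ∨
       (a ∈ A1.alph \ A2.alph ∧ s2' = s2 ∧
          ∃ g1, (s1, g1, a, s1') ∈ A1.E ∧ g = fun π => g1 π.restrictL) ∨
       (a ∈ A2.alph \ A1.alph ∧ s1' = s1 ∧
          ∃ g2, (s2, g2, a, s2') ∈ A2.E ∧ g = fun π => g2 π.restrictR)) }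
  E_alph := by
    rintro s g a s' ⟨s1, s1', s2, s2', a', g', heq, h⟩
    simp only [Prod.mk.injEq] at heq
    obtain ⟨rfl, rfl, rfl, rfl⟩ := heq
    rcases h with h | h | h
    · exact Set.mem_union_left _ h.1.1
    · exact Set.mem_union_left _ h.1.1
    · exact Set.mem_union_right _ h.1.1
  ρ := fun π => ρ12 π ∧ A1.ρ π.restrictL ∧ A2.ρ π.restrictR

/-- `wordProj S w` is the subword `w↓S` of `w` obtained by deleting all letters not in `S`. -/
noncomputable def wordProj {Ev : Type} (S : Set Ev) (w : List Ev) : List Ev :=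
  w.filter fun a => decide (a ∈ S)

/-- The asynchronous shuffle `u1 ∥ u2` of two words `u1 ∈ Σ1*`, `u2 ∈ Σ2*`:
the set of words `w` over `Σ1 ∪ Σ2` with `w↓Σ1 = u1` and `w↓Σ2 = u2`. -/
def wordShuffle {Ev : Type} (S1 S2 : Set Ev) (u1 u2 : List Ev) : Set (List Ev) :=
  { w | (∀ a ∈ w, a ∈ S1 ∪ S2) ∧ wordProj S1 w = u1 ∧ wordProj S2 w = u2 }

/-- The asynchronous shuffle of two languages `L1 ⊆ Σ1*`, `L2 ⊆ Σ2*`. -/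
def langShuffle {Ev : Type} (S1 S2 : Set Ev) (L1 L2 : Set (List Ev)) : Set (List Ev) :=
  { w | ∃ u1 ∈ L1, ∃ u2 ∈ L2, w ∈ wordShuffle S1 S2 u1 u2 }

/-!
A run of `A1 ∥ A2` under `π` is read letter by letter: a shared event moves both components,
a private event moves one and leaves the other in place, and the guard of the composed
transition is the conjunction of the component guards evaluated on the restrictions of `π`.
So projecting a run of the composition onto each component gives runs on `w↓Σ1` and `w↓Σ2`,
and conversely two such runs can be interleaved along `w`; both directions are one
induction on `w` from the right.
-/

theorem wordProj_append_singleton {Ev : Type} (S : Set Ev) (w : List Ev) (a : Ev) :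
    wordProj S (w ++ [a]) = wordProj S w ++ (if a ∈ S then [a] else []) := by
  by_cases ha : a ∈ S <;> simp [wordProj, ha]

namespace FSMv

variable {V Ev : Type} {Dm : V → Type}

/-- The transition relation of the variant `A↓π`. -/
def Step (A : FSMv V Dm Ev) (π : Config Dm A.Vars) (s : A.Q) (a : Ev) (s' : A.Q) : Prop :=
  ∃ g, (s, g, a, s') ∈ A.E ∧ g π

/-- How a component moves when the composition performs `a`: an event outside its alphabet
leaves it where it is. -/
def StepOrStay (A : FSMv V Dm Ev) (π : Config Dm A.Vars) (s : A.Q) (a : Ev) (s' : A.Q) :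
    Prop :=
  A.Step π s a s' ∨ (a ∉ A.alph ∧ s' = s)

section Reach

variable {A : FSMv V Dm Ev} {π : Config Dm A.Vars}

theorem Step.mem_alph {s s' : A.Q} {a : Ev} (h : A.Step π s a s') : a ∈ A.alph :=
  let ⟨_, hE, _⟩ := h
  A.E_alph _ _ _ _ hE

theorem reach_nil_iff {s : A.Q} : A.Reach π [] s ↔ s = A.q0 := by
  refine ⟨fun h => ?_, fun h => h ▸ Reach.nil⟩
  generalize hw : ([] : List Ev) = w at h
  cases h with
  | nil => rfl
  | snoc => simp at hw

theorem reach_append_singleton_iff {w : List Ev} {a : Ev} {s' : A.Q} :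
    A.Reach π (w ++ [a]) s' ↔ ∃ s, A.Reach π w s ∧ A.Step π s a s' := by
  constructor
  · generalize hw : w ++ [a] = v
    rintro (_ | ⟨hr, hE, hg⟩)
    · simp at hw
    · obtain ⟨rfl, ha⟩ := List.append_inj' hw rfl
      cases List.singleton_inj.mp ha
      exact ⟨_, hr, _, hE, hg⟩
  · rintro ⟨s, hr, g, hE, hg⟩
    exact hr.snoc hE hg

theorem reach_wordProj_append_singleton_iff {w : List Ev} {a : Ev} {s' : A.Q} :
    A.Reach π (wordProj A.alph (w ++ [a])) s' ↔
      ∃ s, A.Reach π (wordProj A.alph w) s ∧ A.StepOrStay π s a s' := by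
  by_cases ha : a ∈ A.alph
  · simp [wordProj_append_singleton, ha, reach_append_singleton_iff, StepOrStay]
  · have hstuck : ∀ s, ¬ A.Step π s a s' := fun _ h => ha h.mem_alph
    simp [wordProj_append_singleton, ha, StepOrStay, hstuck]

end Reach

section Par

variable {A1 A2 : FSMv V Dm Ev} {ρ12 : Config Dm (A1.Vars ∪ A2.Vars) → Prop}
  {π : Config Dm (A1.Vars ∪ A2.Vars)}

theorem par_step_iff {s1 s1' : A1.Q} {s2 s2' : A2.Q} {a : Ev} :
    (A1.par A2 ρ12).Step π (s1, s2) a (s1', s2') ↔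
      a ∈ A1.alph ∪ A2.alph ∧ A1.StepOrStay π.restrictL s1 a s1' ∧
        A2.StepOrStay π.restrictR s2 a s2' := by
  constructor
  · rintro ⟨g, ⟨t1, t1', t2, t2', b, g, heq, hcase⟩, hg⟩
    cases heq
    rcases hcase with ⟨ha, g1, g2, hE1, hE2, rfl⟩ | ⟨ha, rfl, g1, hE1, rfl⟩ |
      ⟨ha, rfl, g2, hE2, rfl⟩
    · exact ⟨Or.inl ha.1, .inl ⟨g1, hE1, hg.1⟩, .inl ⟨g2, hE2, hg.2⟩⟩
    · exact ⟨Or.inl ha.1, .inl ⟨g1, hE1, hg⟩, .inr ⟨ha.2, rfl⟩⟩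
    · exact ⟨Or.inr ha.1, .inr ⟨ha.2, rfl⟩, .inl ⟨g2, hE2, hg⟩⟩
  · rintro ⟨ha, ⟨g1, hE1, hg1⟩ | ⟨ha1, rfl⟩, ⟨g2, hE2, hg2⟩ | ⟨ha2, rfl⟩⟩
    · exact ⟨_, ⟨_, _, _, _, a, _, rfl, .inl ⟨⟨A1.E_alph _ _ _ _ hE1,
        A2.E_alph _ _ _ _ hE2⟩, g1, g2, hE1, hE2, rfl⟩⟩, hg1, hg2⟩
    · exact ⟨_, ⟨_, _, _, _, a, _, rfl, .inr (.inl ⟨⟨A1.E_alph _ _ _ _ hE1, ha2⟩, rfl,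
        g1, hE1, rfl⟩)⟩, hg1⟩
    · exact ⟨_, ⟨_, _, _, _, a, _, rfl, .inr (.inr ⟨⟨A2.E_alph _ _ _ _ hE2, ha1⟩, rfl,
        g2, hE2, rfl⟩)⟩, hg2⟩
    · exact absurd ha (by simp [ha1, ha2])

theorem par_reach_iff {w : List Ev} {s1 : A1.Q} {s2 : A2.Q} :
    (A1.par A2 ρ12).Reach π w (s1, s2) ↔
      (∀ a ∈ w, a ∈ A1.alph ∪ A2.alph) ∧ A1.Reach π.restrictL (wordProj A1.alph w) s1 ∧
        A2.Reach π.restrictR (wordProj A2.alph w) s2 := by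
  induction w using List.reverseRecOn generalizing s1 s2 with
  | nil => simp [wordProj, reach_nil_iff, FSMv.par]
  | append_singleton w a ih =>
    refine reach_append_singleton_iff.trans ?_
    rw [reach_wordProj_append_singleton_iff, reach_wordProj_append_singleton_iff]
    change (∃ s : A1.Q × A2.Q, _) ↔ _
    simp only [Prod.exists, par_step_iff, ih, List.forall_mem_append, List.forall_mem_singleton]
    constructor
    · rintro ⟨t1, t2, ⟨hw, hr1, hr2⟩, ha, hs1, hs2⟩
      exact ⟨⟨hw, ha⟩, ⟨t1, hr1, hs1⟩, t2, hr2, hs2⟩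
    · rintro ⟨⟨hw, ha⟩, ⟨t1, hr1, hs1⟩, t2, hr2, hs2⟩
      exact ⟨t1, t2, ⟨hw, hr1, hr2⟩, ha, hs1, hs2⟩

end Par

end FSMv

theorem lang_of_composed_variant_eq_langShuffle_general
    {V Ev : Type} {Dm : V → Type}
    (A1 A2 : FSMv V Dm Ev)
    (ρ12 : Config Dm (A1.Vars ∪ A2.Vars) → Prop)
    (π : Config Dm (A1.Vars ∪ A2.Vars)) :
    (A1.par A2 ρ12).Lang π =
      langShuffle A1.alph A2.alph (A1.Lang π.restrictL) (A2.Lang π.restrictR) := by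
  ext w
  constructor
  · rintro ⟨⟨s1, s2⟩, hs⟩
    obtain ⟨hw, hr1, hr2⟩ := FSMv.par_reach_iff.mp hs
    exact ⟨_, ⟨s1, hr1⟩, _, ⟨s2, hr2⟩, hw, rfl, rfl⟩
  · rintro ⟨_, ⟨s1, hr1⟩, _, ⟨s2, hr2⟩, hw, rfl, rfl⟩
    exact ⟨(s1, s2), FSMv.par_reach_iff.mpr ⟨hw, hr1, hr2⟩⟩

/-- **Lemma 3 (variants of a composed FSMv).** For FSMv's `A1`, `A2` over disjoint
variable sets composed via a composition predicate `ρ12`, and a valid configuration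
`π = π1 + π2` of `A1 ∥ A2` (where `πi` is the restriction of `π` to `Vari`),
`L((A1 ∥ A2)↓π) = L(A1↓π1) ∥ L(A2↓π2)`, the asynchronous shuffle taken with
respect to the alphabets `Σ1` of `A1` and `Σ2` of `A2`. -/
theorem lang_of_composed_variant_eq_langShuffle
    {V Ev : Type} {Dm : V → Type} [∀ x, Finite (Dm x)] [∀ x, Nonempty (Dm x)]
    (A1 A2 : FSMv V Dm Ev)
    (hdisj : Disjoint A1.Vars A2.Vars)
    (ρ12 : Config Dm (A1.Vars ∪ A2.Vars) → Prop)
    (π : Config Dm (A1.Vars ∪ A2.Vars))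
    (hvalid : (A1.par A2 ρ12).ρ π) :
    (A1.par A2 ρ12).Lang π =
      langShuffle A1.alph A2.alph (A1.Lang π.restrictL) (A2.Lang π.restrictR) :=
  lang_of_composed_variant_eq_langShuffle_general A1 A2 ρ12 π
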